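/- Let L(3,3) be the F_p-vector space with basis x_{i,j} for i ∈ {1,2,3} and j ∈ Z/3, equipped with the bracket [x_{i,j}, x_{k,l}] = δ(l, i+j)·x_{i+k,j} − δ(j, k+l)·x_{i+k,l}, where δ(a,b) = 1 if a ≡ b mod 3 and 0 otherwise, and x_{m,j} is interpreted as 0 whenever m > 3. Then this bracket is bilinear, alternating ([x,x] = 0 for all x), and satisfies the Jacobi identity, so L(3,3) is a Lie algebra over F_p. -/
import Mathlib

def Cst (a b m : Fin 3 × ZMod 3) : ℤ :=
  if (a.1.1 + 1) + (b.1.1 + 1) = m.1.1 + 1 then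
    ((if b.2 = ((a.1.1 + 1 : ℕ) : ZMod 3) + a.2 ∧ a.2 = m.2 then 1 else 0) -
     (if a.2 = ((b.1.1 + 1 : ℕ) : ZMod 3) + b.2 ∧ b.2 = m.2 then 1 else 0))
  else 0

lemma Cdiag : ∀ a m, Cst a a m = 0 := by decide

lemma Cskew : ∀ a b m, Cst b a m = - Cst a b m := by decide

set_option maxHeartbeats 10000000 in
lemma Cjac : ∀ a b d m, (∑ e, Cst b d e * Cst a e m) =
    (∑ e, Cst a b e * Cst e d m) + ∑ e, Cst a d e * Cst b e m := by decide

noncomputable def bracket (p : ℕ) (x y : (Fin 3 × ZMod 3) → ZMod p) :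
    (Fin 3 × ZMod 3) → ZMod p := fun m =>
  ∑ a : Fin 3 × ZMod 3, ∑ b : Fin 3 × ZMod 3,
    x a * y b *
      (if (a.1.1 + 1) + (b.1.1 + 1) = m.1.1 + 1 then
        ((if b.2 = ((a.1.1 + 1 : ℕ) : ZMod 3) + a.2 ∧ a.2 = m.2 then 1 else 0) -
         (if a.2 = ((b.1.1 + 1 : ℕ) : ZMod 3) + b.2 ∧ b.2 = m.2 then 1 else 0))
      else 0)

lemma bracket_eq (p : ℕ) (x y : (Fin 3 × ZMod 3) → ZMod p) :
    bracket p x y = fun m => ∑ a, ∑ b, x a * y b * ((Cst a b m : ℤ) : ZMod p) := by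
  funext m
  refine Finset.sum_congr rfl fun a _ => Finset.sum_congr rfl fun b _ => ?_
  unfold Cst
  split_ifs <;> push_cast <;> ring

/-- The bracket is bilinear, alternating and satisfies the Jacobi identity, so
it makes `L(3,3)` a Lie algebra over `ZMod p`. -/
theorem L33_lie_algebra (p : ℕ) (hp : p.Prime) :
    (∀ x x' y : (Fin 3 × ZMod 3) → ZMod p,
        bracket p (x + x') y = bracket p x y + bracket p x' y) ∧
    (∀ (c : ZMod p) (x y : (Fin 3 × ZMod 3) → ZMod p),
        bracket p (c • x) y = c • bracket p x y) ∧
    (∀ x y y' : (Fin 3 × ZMod 3) → ZMod p,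
        bracket p x (y + y') = bracket p x y + bracket p x y') ∧
    (∀ (c : ZMod p) (x y : (Fin 3 × ZMod 3) → ZMod p),
        bracket p x (c • y) = c • bracket p x y) ∧
    (∀ x : (Fin 3 × ZMod 3) → ZMod p, bracket p x x = 0) ∧
    (∀ x y z : (Fin 3 × ZMod 3) → ZMod p,
        bracket p x (bracket p y z) =
          bracket p (bracket p x y) z + bracket p y (bracket p x z)) := by
  refine ⟨?_, ?_, ?_, ?_, ?_, ?_⟩
  · intro x x' y
    simp only [bracket_eq]
    funext m
    simp only [Pi.add_apply, add_mul, Finset.sum_add_distrib]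
  · intro c x y
    simp only [bracket_eq]
    funext m
    simp only [Pi.smul_apply, smul_eq_mul, Finset.mul_sum]
    refine Finset.sum_congr rfl fun a _ => Finset.sum_congr rfl fun b _ => by ring
  · intro x y y'
    simp only [bracket_eq]
    funext m
    simp only [Pi.add_apply, mul_add, add_mul, Finset.sum_add_distrib]
  · intro c x y
    simp only [bracket_eq]
    funext m
    simp only [Pi.smul_apply, smul_eq_mul, Finset.mul_sum]
    refine Finset.sum_congr rfl fun a _ => Finset.sum_congr rfl fun b _ => by ring
  · intro x
    rw [bracket_eq]; funext m
    rw [← Finset.sum_product']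
    refine Finset.sum_involution (fun ab _ => (ab.2, ab.1)) ?_ ?_
      (fun _ _ => Finset.mem_univ _) ?_
    · intro a _
      have := Cskew a.1 a.2 m
      push_cast [this]
      ring
    · intro a _ h heq
      apply h
      have h1 : a.2 = a.1 := congrArg Prod.fst heq
      rw [h1, Cdiag a.1 m]; simp
    · intro a _; rfl
  · intro x y z
    simp only [bracket_eq]
    funext m
    simp only [Pi.add_apply]
    -- notation shortcut
    set cc : (Fin 3 × ZMod 3) → (Fin 3 × ZMod 3) → (Fin 3 × ZMod 3) → ZMod p :=
      fun a b m => ((Cst a b m : ℤ) : ZMod p) with hcc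
    have key : ∀ a b d : Fin 3 × ZMod 3,
        (∑ e, cc b d e * cc a e m) =
          (∑ e, cc a b e * cc e d m) + ∑ e, cc a d e * cc b e m := by
      intro a b d
      have := congrArg (fun t : ℤ => (t : ZMod p)) (Cjac a b d m)
      push_cast at this
      simpa [hcc] using this
    calc
      (∑ a, ∑ e, x a * (∑ b, ∑ d, y b * z d * cc b d e) * cc a e m)
          = ∑ a, ∑ e, ∑ b, ∑ d, x a * y b * z d * (cc b d e * cc a e m) := by
            refine Finset.sum_congr rfl fun a _ => Finset.sum_congr rfl fun e _ => ?_
            simp only [Finset.mul_sum, Finset.sum_mul]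
            exact Finset.sum_congr rfl fun b _ => Finset.sum_congr rfl fun d _ => by ring
      _ = ∑ a, ∑ b, ∑ d, ∑ e, x a * y b * z d * (cc b d e * cc a e m) :=
            Finset.sum_congr rfl fun a _ =>
              (Finset.sum_comm.trans (Finset.sum_congr rfl fun b _ => Finset.sum_comm))
      _ = ∑ a, ∑ b, ∑ d, x a * y b * z d * (∑ e, cc b d e * cc a e m) := by
            refine Finset.sum_congr rfl fun a _ => Finset.sum_congr rfl fun b _ =>
              Finset.sum_congr rfl fun d _ => ?_
            rw [Finset.mul_sum]
      _ = ∑ a, ∑ b, ∑ d, (x a * y b * z d * (∑ e, cc a b e * cc e d m) +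
            x a * y b * z d * (∑ e, cc a d e * cc b e m)) := by
            refine Finset.sum_congr rfl fun a _ => Finset.sum_congr rfl fun b _ =>
              Finset.sum_congr rfl fun d _ => ?_
            rw [key a b d, mul_add]
      _ = (∑ a, ∑ b, ∑ d, x a * y b * z d * (∑ e, cc a b e * cc e d m)) +
            ∑ a, ∑ b, ∑ d, x a * y b * z d * (∑ e, cc a d e * cc b e m) := by
            simp only [Finset.sum_add_distrib]
      _ = (∑ e, ∑ d, (∑ a, ∑ b, x a * y b * cc a b e) * z d * cc e d m) +
            ∑ b, ∑ e, y b * (∑ a, ∑ d, x a * z d * cc a d e) * cc b e m := by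
            congr 1
            · symm
              calc
                (∑ e, ∑ d, (∑ a, ∑ b, x a * y b * cc a b e) * z d * cc e d m)
                    = ∑ e, ∑ d, ∑ a, ∑ b, x a * y b * z d * (cc a b e * cc e d m) := by
                      refine Finset.sum_congr rfl fun e _ => Finset.sum_congr rfl fun d _ => ?_
                      simp only [Finset.sum_mul]
                      exact Finset.sum_congr rfl fun a _ =>
                        Finset.sum_congr rfl fun b _ => by ring
                _ = ∑ e, ∑ a, ∑ d, ∑ b, x a * y b * z d * (cc a b e * cc e d m) :=
                      Finset.sum_congr rfl fun e _ => Finset.sum_comm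
                _ = ∑ a, ∑ e, ∑ d, ∑ b, x a * y b * z d * (cc a b e * cc e d m) :=
                      Finset.sum_comm
                _ = ∑ a, ∑ e, ∑ b, ∑ d, x a * y b * z d * (cc a b e * cc e d m) :=
                      Finset.sum_congr rfl fun a _ =>
                        Finset.sum_congr rfl fun e _ => Finset.sum_comm
                _ = ∑ a, ∑ b, ∑ e, ∑ d, x a * y b * z d * (cc a b e * cc e d m) :=
                      Finset.sum_congr rfl fun a _ => Finset.sum_comm
                _ = ∑ a, ∑ b, ∑ d, ∑ e, x a * y b * z d * (cc a b e * cc e d m) :=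
                      Finset.sum_congr rfl fun a _ =>
                        Finset.sum_congr rfl fun b _ => Finset.sum_comm
                _ = ∑ a, ∑ b, ∑ d, x a * y b * z d * (∑ e, cc a b e * cc e d m) := by
                      refine Finset.sum_congr rfl fun a _ => Finset.sum_congr rfl fun b _ =>
                        Finset.sum_congr rfl fun d _ => ?_
                      rw [Finset.mul_sum]
            · symm
              calc
                (∑ b, ∑ e, y b * (∑ a, ∑ d, x a * z d * cc a d e) * cc b e m)
                    = ∑ b, ∑ e, ∑ a, ∑ d, x a * y b * z d * (cc a d e * cc b e m) := by
                      refine Finset.sum_congr rfl fun b _ => Finset.sum_congr rfl fun e _ => ?_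
                      simp only [Finset.mul_sum, Finset.sum_mul]
                      exact Finset.sum_congr rfl fun a _ =>
                        Finset.sum_congr rfl fun d _ => by ring
                _ = ∑ b, ∑ a, ∑ e, ∑ d, x a * y b * z d * (cc a d e * cc b e m) :=
                      Finset.sum_congr rfl fun b _ => Finset.sum_comm
                _ = ∑ a, ∑ b, ∑ e, ∑ d, x a * y b * z d * (cc a d e * cc b e m) :=
                      Finset.sum_comm
                _ = ∑ a, ∑ b, ∑ d, ∑ e, x a * y b * z d * (cc a d e * cc b e m) :=
                      Finset.sum_congr rfl fun a _ =>
                        Finset.sum_congr rfl fun b _ => Finset.sum_comm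
                _ = ∑ a, ∑ b, ∑ d, x a * y b * z d * (∑ e, cc a d e * cc b e m) := by
                      refine Finset.sum_congr rfl fun a _ => Finset.sum_congr rfl fun b _ =>
                        Finset.sum_congr rfl fun d _ => ?_
                      rw [Finset.mul_sum]
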